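/- arXiv:2002.08388 — 5 statements merged into one kernel-verified Lean document; each statement's English description precedes it below -/
import Mathlib

section
/- Let M be a nonzero module over A = k[x_1,…,x_n] equipped with an AV-module structure π, and suppose M is finitely generated as an A-module. Then the sequence of variables x_1, …, x_n is an M-regular sequence: for each i with 1 ≤ i ≤ n, multiplication by x_i is injective on the quotient M/(x_1·M + ⋯ + x_{i−1}·M), and M/(x_1·M + ⋯ + x_n·M) ≠ 0. -/
/-!
Fix `i` and put `N = M/(x₁, …, x_{i-1})M`. The ideal `(x₁, …, x_{i-1})` is stable under `∂ᵢ`, so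
`D = π(∂ᵢ)` descends to `N`, where it satisfies `D xᵢ - xᵢ D = 1`. If `xᵢ s = 0`, induction gives
`xᵢʲ Dʲ s = (-1)ʲ j! s`, so in characteristic zero `s` lies in every `xᵢʲ N`, and Krull's
intersection theorem yields `s = q xᵢ s = 0` for some `q`.

The annihilator of `M` is stable under every `∂ᵢ`. Differentiating a nonzero element of such an
ideal of minimal degree produces a nonzero constant, so the annihilator is zero. Nakayama's lemma
then rules out `(x₁, …, xₙ)M = M`, since `(x₁, …, xₙ)` is a proper ideal.
-/

open MvPolynomial

attribute [local instance 100] LieRing.ofAssociativeRing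

section Regularity

variable {R N : Type*} [CommRing R] [AddCommGroup N] [Module R N] {x : R} {D : N →+ N}

theorem smul_map_pow_smul (hD : ∀ m, D (x • m) = x • D m + m) (j : ℕ) (m : N) :
    x • D (x ^ j • m) = x ^ (j + 1) • D m + j • x ^ j • m := by
  induction j with
  | zero => simp
  | succ j ih =>
    rw [pow_succ', mul_smul, hD, smul_add, ih, succ_nsmul, smul_add, smul_comm x j,
      ← mul_smul x (x ^ j), ← pow_succ', ← mul_smul x (x ^ (j + 1)), ← pow_succ']
    abel

theorem pow_smul_iterate_eq_of_smul_eq_zero (hD : ∀ m, D (x • m) = x • D m + m) {s : N}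
    (hs : x • s = 0) (j : ℕ) : x ^ j • D^[j] s = ((-1) ^ j * j.factorial : ℤ) • s := by
  have hxDs : x • D s = -s := by rw [← add_eq_zero_iff_eq_neg, ← hD, hs, map_zero]
  induction j with
  | zero => simp
  | succ j ih =>
    have key := smul_map_pow_smul hD j (D^[j] s)
    rw [ih, map_zsmul, smul_comm, hxDs] at key
    rw [Function.iterate_succ_apply', eq_sub_of_add_eq key.symm, Nat.factorial_succ]
    push_cast
    rw [smul_neg, ← Nat.cast_smul_eq_nsmul ℤ, smul_smul, ← neg_smul, ← sub_smul]
    congr 1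
    ring

theorem mem_iInf_pow_smul_top_of_smul_eq_zero (k : Type*) [Field k] [CharZero k] [Module k N]
    [Algebra k R] [IsScalarTower k R N] (hD : ∀ m, D (x • m) = x • D m + m) {s : N}
    (hs : x • s = 0) : s ∈ ⨅ j : ℕ, (Ideal.span {x} ^ j • ⊤ : Submodule R N) := by
  refine Submodule.mem_iInf _ |>.mpr fun j => ?_
  have hc : ((-1) ^ j * j.factorial : k) ≠ 0 := by simp [Nat.factorial_ne_zero]
  have hs' : s = ((-1) ^ j * j.factorial : k)⁻¹ • x ^ j • D^[j] s := by
    rw [pow_smul_iterate_eq_of_smul_eq_zero hD hs, ← Int.cast_smul_eq_zsmul k, smul_smul]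
    push_cast
    rw [inv_mul_cancel₀ hc, one_smul]
  rw [hs']
  exact Submodule.smul_of_tower_mem _ _ <| Submodule.smul_mem_smul
    (Ideal.pow_mem_pow (Ideal.mem_span_singleton_self x) j) Submodule.mem_top

theorem isSMulRegular_of_map_smul_eq_smul_map_add_self (k : Type*) [Field k] [CharZero k]
    [Module k N] [Algebra k R] [IsScalarTower k R N] [IsNoetherianRing R] [Module.Finite R N]
    (hD : ∀ m, D (x • m) = x • D m + m) : IsSMulRegular N x := by
  refine .of_right_eq_zero_of_smul fun s hs => ?_
  obtain ⟨⟨r, hr⟩, hrs⟩ := (Ideal.mem_iInf_smul_pow_eq_bot_iff _ s).mp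
    (mem_iInf_pow_smul_top_of_smul_eq_zero k hD hs)
  obtain ⟨q, rfl⟩ := Ideal.mem_span_singleton'.mp hr
  rw [← hrs, mul_smul, hs, smul_zero]

end Regularity

theorem Submodule.top_ne_ideal_smul_of_annihilator_eq_bot {A M : Type*} [CommRing A]
    [AddCommGroup M] [Module A M] [Module.Finite A M] (h : Module.annihilator A M = ⊥)
    {I : Ideal A} (hI : I ≠ ⊤) : (⊤ : Submodule A M) ≠ I • ⊤ := by
  intro H
  obtain ⟨r, hr1, hr⟩ :=
    exists_sub_one_mem_and_smul_eq_zero_of_fg_of_le_smul I ⊤ Module.Finite.fg_top H.le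
  have hr0 : r = 0 := by
    rw [← Submodule.mem_bot A, ← h, Module.mem_annihilator]
    exact fun m => hr m trivial
  exact hI (I.eq_top_of_isUnit_mem hr1 (by simp [hr0]))

theorem Derivation.mapsTo_span {k A : Type*} [CommSemiring k] [CommRing A] [Algebra k A]
    (δ : Derivation k A A) {S : Set A} (hS : ∀ s ∈ S, δ s ∈ Ideal.span S) :
    Set.MapsTo δ (Ideal.span S : Set A) (Ideal.span S) := by
  intro a ha
  induction ha using Submodule.span_induction with
  | mem s hs => exact hS s hs
  | zero => simp
  | add a b _ _ ha hb => simpa using Ideal.add_mem _ ha hb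
  | smul a b hb hδb =>
    rw [smul_eq_mul, δ.leibniz, smul_eq_mul, smul_eq_mul]
    exact Ideal.add_mem _ (Ideal.mul_mem_left _ a hδb) (Ideal.mul_mem_right _ _ hb)

section Leibniz

variable {k A M : Type*} [CommRing k] [CommRing A] [Algebra k A] [AddCommGroup M] [Module k M]
  [Module A M] {δ : Derivation k A A} {φ : M →ₗ[k] M}

theorem mapsTo_annihilator_of_leibniz (hφ : ∀ (f : A) (m : M), φ (f • m) = f • φ m + δ f • m) :
    Set.MapsTo δ (Module.annihilator A M : Set A) (Module.annihilator A M) := by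
  intro f hf
  rw [SetLike.mem_coe, Module.mem_annihilator] at hf ⊢
  intro m
  simpa [hf] using (hφ f m).symm

theorem mapsTo_smul_top_of_leibniz (hφ : ∀ (f : A) (m : M), φ (f • m) = f • φ m + δ f • m)
    {I : Ideal A} (hI : Set.MapsTo δ (I : Set A) I) :
    Set.MapsTo φ ((I • ⊤ : Submodule A M) : Set M) (I • ⊤ : Submodule A M) := by
  intro m hm
  refine Submodule.smul_induction_on hm (fun f hf m _ => ?_) fun a b ha hb => ?_
  · rw [hφ]
    exact Submodule.add_mem _ (Submodule.smul_mem_smul hf trivial)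
      (Submodule.smul_mem_smul (hI hf) trivial)
  · simpa using Submodule.add_mem _ ha hb

theorem exists_leibniz_quotient_smul_top [IsScalarTower k A M]
    (hφ : ∀ (f : A) (m : M), φ (f • m) = f • φ m + δ f • m)
    {I : Ideal A} (hI : Set.MapsTo δ (I : Set A) I) :
    ∃ ψ : (M ⧸ (I • ⊤ : Submodule A M)) →ₗ[k] M ⧸ (I • ⊤ : Submodule A M),
      ∀ (f : A) (m : M ⧸ (I • ⊤ : Submodule A M)), ψ (f • m) = f • ψ m + δ f • m := by
  refine ⟨Submodule.mapQ ((I • ⊤ : Submodule A M).restrictScalars k)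
    ((I • ⊤ : Submodule A M).restrictScalars k) φ fun _ hm => mapsTo_smul_top_of_leibniz hφ hI hm,
    fun f m => ?_⟩
  obtain ⟨m, rfl⟩ := Submodule.Quotient.mk_surjective (I • ⊤ : Submodule A M) m
  exact congrArg Submodule.Quotient.mk (hφ f m)

end Leibniz

namespace MvPolynomial

variable {σ R : Type*} {n : ℕ}

theorem totalDegree_pderiv_lt [CommSemiring R] {i : σ} {f : MvPolynomial σ R}
    (h : pderiv i f ≠ 0) : (pderiv i f).totalDegree < f.totalDegree := by
  classical
  obtain ⟨m, hm, hdeg⟩ := Finset.exists_mem_eq_sup _ (support_nonempty.mpr h)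
    fun s => s.sum fun _ e => e
  have hmf : m + Finsupp.single i 1 ∈ f.support := by
    rw [mem_support_iff, coeff_pderiv] at hm
    exact mem_support_iff.mpr (left_ne_zero_of_mul hm)
  calc (pderiv i f).totalDegree = m.sum fun _ e => e := hdeg
    _ < (m + Finsupp.single i 1).sum fun _ e => e := by
      rw [Finsupp.sum_add_index' (fun _ => rfl) fun _ _ _ => rfl, Finsupp.sum_single_index rfl]
      omega
    _ ≤ f.totalDegree := le_totalDegree hmf

theorem eq_C_of_forall_pderiv_eq_zero [CommRing R] [IsDomain R] [CharZero R]
    {f : MvPolynomial σ R} (h : ∀ i, pderiv i f = 0) : f = C (coeff 0 f) := by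
  classical
  ext m
  rw [coeff_C]
  split_ifs with hm
  · rw [hm]
  obtain ⟨i, hi⟩ := Finsupp.ne_iff.mp (Ne.symm hm)
  have hm' : m - Finsupp.single i 1 + Finsupp.single i 1 = m :=
    tsub_add_cancel_of_le (Finsupp.single_le_iff.mpr (Nat.one_le_iff_ne_zero.mpr hi))
  have := coeff_pderiv (i := i) f (m - Finsupp.single i 1)
  rw [h i, coeff_zero, hm', eq_comm, mul_eq_zero] at this
  exact this.resolve_right (by norm_cast)

theorem eq_bot_or_eq_top_of_mapsTo_pderiv [Field R] [CharZero R] (I : Ideal (MvPolynomial σ R))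
    (hI : ∀ i, Set.MapsTo (pderiv i) (I : Set (MvPolynomial σ R)) I) : I = ⊥ ∨ I = ⊤ := by
  refine or_iff_not_imp_left.mpr fun hI0 => ?_
  obtain ⟨f, hfI, hf⟩ := Submodule.ne_bot_iff _ |>.mp hI0
  induction hd : f.totalDegree using Nat.strong_induction_on generalizing f with
  | _ d ih =>
  by_cases hconst : ∀ i, pderiv i f = 0
  · have hC := eq_C_of_forall_pderiv_eq_zero hconst
    have hc : coeff 0 f ≠ 0 := fun h0 => hf (by rw [hC, h0, C_0])
    exact Ideal.eq_top_of_isUnit_mem I hfI (hC ▸ hc.isUnit.map C)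
  · obtain ⟨i, hi⟩ := not_forall.mp hconst
    exact ih _ (hd ▸ totalDegree_pderiv_lt hi) _ (hI i hfI) hi rfl

theorem ofList_ofFn_X_ne_top [CommSemiring R] [Nontrivial R] :
    Ideal.ofList (List.ofFn fun i : Fin n => (X i : MvPolynomial (Fin n) R)) ≠ ⊤ := by
  refine ne_top_of_le_ne_top (RingHom.ker_ne_top constantCoeff) (Ideal.span_le.mpr ?_)
  rintro _ hx
  obtain ⟨i, rfl⟩ := List.mem_ofFn.mp hx
  exact constantCoeff_X R i

theorem pderiv_eq_zero_of_mem_take_ofFn_X [CommSemiring R] (i : Fin n) {p : MvPolynomial (Fin n) R}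
    (hp : p ∈ (List.ofFn fun j : Fin n => (X j : MvPolynomial (Fin n) R)).take i) :
    pderiv i p = 0 := by
  obtain ⟨j, hj, rfl⟩ := List.mem_iff_getElem.mp hp
  rw [List.getElem_take, List.getElem_ofFn]
  refine pderiv_X_of_ne (Fin.ne_of_lt ?_)
  rw [List.length_take] at hj
  exact Fin.mk_lt_of_lt_val (lt_of_lt_of_le hj (min_le_left _ _))

end MvPolynomial

section LeibnizFamily

variable {k M : Type*} [Field k] [CharZero k] {n : ℕ} [AddCommGroup M] [Module k M]
  [Module (MvPolynomial (Fin n) k) M] [Module.Finite (MvPolynomial (Fin n) k) M]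
  {φ : Fin n → M →ₗ[k] M}

theorem isWeaklyRegular_ofFn_X_of_leibniz [IsScalarTower k (MvPolynomial (Fin n) k) M]
    (hφ : ∀ i (f : MvPolynomial (Fin n) k) m, φ i (f • m) = f • φ i m + pderiv i f • m) :
    RingTheory.Sequence.IsWeaklyRegular M
      (List.ofFn fun i : Fin n => (X i : MvPolynomial (Fin n) k)) := by
  refine ⟨fun i hi => ?_⟩
  let j : Fin n := ⟨i, by simpa using hi⟩
  let I := Ideal.ofList ((List.ofFn fun j : Fin n => (X j : MvPolynomial (Fin n) k)).take j)
  have hI : Set.MapsTo (pderiv j) (I : Set (MvPolynomial (Fin n) k)) I :=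
    (pderiv (R := k) j).mapsTo_span fun s hs => by
      rw [pderiv_eq_zero_of_mem_take_ofFn_X j hs]
      exact zero_mem _
  obtain ⟨ψ, hψ⟩ := exists_leibniz_quotient_smul_top (hφ j) hI
  rw [List.getElem_ofFn]
  exact isSMulRegular_of_map_smul_eq_smul_map_add_self k (D := ψ.toAddMonoidHom)
    fun m => by simpa using hψ (X j) m

theorem top_ne_ofList_ofFn_X_smul_top_of_leibniz [Nontrivial M]
    (hφ : ∀ i (f : MvPolynomial (Fin n) k) m, φ i (f • m) = f • φ i m + pderiv i f • m) :
    (⊤ : Submodule (MvPolynomial (Fin n) k) M) ≠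
      Ideal.ofList (List.ofFn fun i : Fin n => (X i : MvPolynomial (Fin n) k)) • ⊤ := by
  have hann : Module.annihilator (MvPolynomial (Fin n) k) M = ⊥ :=
    (eq_bot_or_eq_top_of_mapsTo_pderiv _ fun i =>
      mapsTo_annihilator_of_leibniz (hφ i)).resolve_right
      (Module.annihilator_eq_top_iff.not.mpr (not_subsingleton M))
  exact Submodule.top_ne_ideal_smul_of_annihilator_eq_bot hann ofList_ofFn_X_ne_top

end LeibnizFamily

theorem av_module_variables_regular_sequence_general
    (k : Type*) [Field k] [CharZero k] (n : ℕ)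
    (M : Type*) [AddCommGroup M] [Nontrivial M] [Module k M]
    [Module (MvPolynomial (Fin n) k) M] [IsScalarTower k (MvPolynomial (Fin n) k) M]
    (π : Derivation k (MvPolynomial (Fin n) k) (MvPolynomial (Fin n) k)
        →ₗ⁅k⁆ Module.End k M)
    (hLeibniz : ∀ (η : Derivation k (MvPolynomial (Fin n) k) (MvPolynomial (Fin n) k))
        (f : MvPolynomial (Fin n) k) (m : M),
        π η (f • m) = f • (π η m) + (η f) • m)
    [Module.Finite (MvPolynomial (Fin n) k) M] :
    RingTheory.Sequence.IsRegular M (List.ofFn fun i : Fin n => (X i : MvPolynomial (Fin n) k)) :=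
  ⟨isWeaklyRegular_ofFn_X_of_leibniz fun i => hLeibniz (pderiv i),
    top_ne_ofList_ofFn_X_smul_top_of_leibniz fun i => hLeibniz (pderiv i)⟩

/-- Let `M` be a nonzero `AV`-module over `A = k[x_1, …, x_n]` which is
finitely generated as an `A`-module.  Then `x_1, …, x_n` is an `M`-regular sequence:
each `x_i` acts injectively on `M/(x_1 M + ⋯ + x_{i-1} M)` and `M/(x_1 M + ⋯ + x_n M) ≠ 0`. -/
theorem av_module_variables_regular_sequence
    (k : Type*) [Field k] [IsAlgClosed k] [CharZero k] (n : ℕ)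
    (M : Type*) [AddCommGroup M] [Nontrivial M] [Module k M]
    [Module (MvPolynomial (Fin n) k) M] [IsScalarTower k (MvPolynomial (Fin n) k) M]
    (π : Derivation k (MvPolynomial (Fin n) k) (MvPolynomial (Fin n) k)
        →ₗ⁅k⁆ Module.End k M)
    (hLeibniz : ∀ (η : Derivation k (MvPolynomial (Fin n) k) (MvPolynomial (Fin n) k))
        (f : MvPolynomial (Fin n) k) (m : M),
        π η (f • m) = f • (π η m) + (η f) • m)
    [Module.Finite (MvPolynomial (Fin n) k) M] :
    RingTheory.Sequence.IsRegular M (List.ofFn fun i : Fin n => (X i : MvPolynomial (Fin n) k)) :=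
  av_module_variables_regular_sequence_general k n M π hLeibniz
end

section
/- Let A be a commutative k-algebra which is an integral domain, of finite type over k, and formally smooth over k. Let I be an ideal of A which is stable under all derivations, i.e. δ(I) ⊆ I for every δ ∈ Der_k(A). Then I = 0 or I = A. (Equivalently, A is a simple module over the ring of operators generated by multiplications and derivations.) -/
/-!
Pick a maximal ideal `m ⊇ I`; its residue field is `k`, hence formally smooth over `k`, so the
conormal map `m/m² → k ⊗ Ω[A⁄k]` splits. Together with projectivity of `Ω[A⁄k]` this yields
generators `xᵢ` of `m` and derivations `δᵢ` whose "Euler operator" `E = ∑ xᵢ δᵢ` is the identity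
on `m/m²`; by the Leibniz rule `E` is then multiplication by `N` on `m^N/m^(N+1)`. If
`I ⊆ m^N` with `N ≥ 1`, stability gives `E(I) ⊆ m·m^N`, so `N • I ⊆ m^(N+1)` and, in
characteristic zero, `I ⊆ m^(N+1)`. Thus `I ⊆ ⋂ m^N = 0` by Krull's intersection theorem.
-/

universe u

theorem Derivation.sum_apply {R A M ι : Type*} [CommSemiring R] [CommSemiring A] [Algebra R A]
    [AddCommMonoid M] [Module A M] [Module R M] (s : Finset ι) (D : ι → Derivation R A M)
    (a : A) : (∑ i ∈ s, D i) a = ∑ i ∈ s, D i a := by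
  simp only [← Derivation.coeFnAddMonoidHom_apply, map_sum, Finset.sum_apply]

theorem Derivation.exists_compDer_eq_of_surjective {R A M N : Type*} [CommRing R] [CommRing A]
    [Algebra R A] [Algebra.FormallySmooth R A]
    [AddCommGroup M] [Module A M] [Module R M] [IsScalarTower R A M]
    [AddCommGroup N] [Module A N] [Module R N] [IsScalarTower R A N]
    (f : M →ₗ[A] N) (hf : Function.Surjective f) (D : Derivation R A N) :
    ∃ D' : Derivation R A M, f.compDer D' = D := by
  have : Module.Projective A Ω[A⁄R] := Algebra.FormallySmooth.projective_kaehlerDifferential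
  obtain ⟨g, hg⟩ := Module.projective_lifting_property f D.liftKaehlerDifferential hf
  refine ⟨g.compDer (KaehlerDifferential.D R A), Derivation.ext fun a => ?_⟩
  simpa using LinearMap.congr_fun hg (KaehlerDifferential.D R A a)

open KaehlerDifferential in
theorem Ideal.exists_derivation_toCotangent {R A : Type*} [CommRing R] [CommRing A]
    [Algebra R A] [Algebra.FormallySmooth R A] (J : Ideal A) [Algebra.FormallySmooth R (A ⧸ J)] :
    ∃ d : Derivation R A J.Cotangent, ∀ x : J, d x = J.toCotangent x := by
  obtain ⟨l, hl⟩ := (Algebra.FormallySmooth.iff_split_injection (P := A)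
    Ideal.Quotient.mk_surjective).mp ‹Algebra.FormallySmooth R (A ⧸ J)›
  have hker : RingHom.ker (algebraMap A (A ⧸ J)) = J := Ideal.mk_ker
  let e := Ideal.Cotangent.equivOfEq _ _ hker
  refine ⟨(e.toLinearMap ∘ₗ l ∘ₗ TensorProduct.mk A (A ⧸ J) Ω[A⁄R] 1).compDer (D R A),
    fun x => ?_⟩
  -- `1 ⊗ dx` is the image of the class of `x` under the conormal map, which `l` retracts.
  exact congr_arg e (LinearMap.congr_fun hl (Ideal.toCotangent _ ⟨x, hker.symm ▸ x.2⟩))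

theorem Ideal.exists_sum_smul_derivation_sub_mem_sq {k A : Type*} [CommRing k] [CommRing A]
    [Algebra k A] [Algebra.FormallySmooth k A] (m : Ideal A) (hm : m.FG)
    [Algebra.FormallySmooth k (A ⧸ m)] :
    ∃ (n : ℕ) (x : Fin n → A) (δ : Fin n → Derivation k A A),
      (∀ i, x i ∈ m) ∧ ∀ y ∈ m, (∑ i, x i • δ i) y - y ∈ m ^ 2 := by
  obtain ⟨n, x, hx⟩ := Submodule.fg_iff_exists_fin_generating_family.mp hm
  have hxm : ∀ i, x i ∈ m := fun i => hx ▸ Submodule.subset_span (Set.mem_range_self i)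
  let g : (Fin n → A) →ₗ[A] m := LinearMap.codRestrict m (Fintype.linearCombination A x)
    fun c => by
      rw [Fintype.linearCombination_apply]
      exact m.sum_mem fun i _ => m.mul_mem_left _ (hxm i)
  have hg : Function.Surjective g := by
    rintro ⟨y, hy⟩
    obtain ⟨c, hc⟩ := (Submodule.mem_span_range_iff_exists_fun A).mp (hx ▸ hy)
    exact ⟨c, Subtype.ext (by simpa [g, Fintype.linearCombination_apply] using hc)⟩
  obtain ⟨d, hd⟩ := m.exists_derivation_toCotangent (R := k)
  obtain ⟨δ, hδ⟩ := Derivation.exists_compDer_eq_of_surjective (m.toCotangent ∘ₗ g)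
    (m.toCotangent_surjective.comp hg) d
  refine ⟨n, x, fun i => (LinearMap.proj i).compDer δ, hxm, fun y hy => ?_⟩
  have h : m.toCotangent (g (δ y)) = m.toCotangent ⟨y, hy⟩ := by
    rw [← hd ⟨y, hy⟩]
    exact congr($hδ y)
  rw [Ideal.toCotangent_eq] at h
  convert h using 2
  simp [Derivation.sum_apply, g, Fintype.linearCombination_apply, mul_comm]

theorem Derivation.sub_nsmul_mem_pow_succ {R A : Type*} [CommRing R] [CommRing A] [Algebra R A]
    (E : Derivation R A A) {m : Ideal A} (hE : ∀ y ∈ m, E y - y ∈ m ^ 2) {N : ℕ} (hN : 1 ≤ N) :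
    ∀ a ∈ m ^ N, E a - N • a ∈ m ^ (N + 1) := by
  induction N, hN using Nat.le_induction with
  | base => simpa using hE
  | succ N hN ih =>
    intro a ha
    rw [pow_succ] at ha
    refine Submodule.mul_induction_on ha (fun u hu v hv => ?_) (fun r t hr ht => ?_)
    · have : E (u * v) - (N + 1) • (u * v) = v * (E u - N • u) + u * (E v - v) := by
        rw [Derivation.leibniz, smul_eq_mul, smul_eq_mul, nsmul_eq_mul, nsmul_eq_mul]
        push_cast
        ring
      rw [this]
      exact add_mem (pow_succ' m (N + 1) ▸ Ideal.mul_mem_mul hv (ih u hu))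
        (pow_add m N 2 ▸ Ideal.mul_mem_mul hu (hE v hv))
    · rw [map_add, smul_add, add_sub_add_comm]
      exact add_mem hr ht

theorem Ideal.le_pow_succ_of_le_pow {k A ι : Type*} [Field k] [CharZero k] [CommRing A]
    [Algebra k A] [Fintype ι] {m I : Ideal A} {x : ι → A} {δ : ι → Derivation k A A}
    (hx : ∀ i, x i ∈ m) (hE : ∀ y ∈ m, (∑ i, x i • δ i) y - y ∈ m ^ 2)
    (hI : ∀ i, ∀ a ∈ I, δ i a ∈ I) {N : ℕ} (hN : 1 ≤ N) (hIN : I ≤ m ^ N) :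
    I ≤ m ^ (N + 1) := by
  intro a ha
  have hEa : (∑ i, x i • δ i) a ∈ m ^ (N + 1) := by
    rw [Derivation.sum_apply, pow_succ']
    exact Ideal.sum_mem _ fun i _ => Ideal.mul_mem_mul (hx i) (hIN (hI i a ha))
  have hNa : (N : k) • a ∈ m ^ (N + 1) := by
    rw [Nat.cast_smul_eq_nsmul]
    simpa using sub_mem hEa (Derivation.sub_nsmul_mem_pow_succ _ hE hN a (hIN ha))
  have hNk : (N : k) ≠ 0 := Nat.cast_ne_zero.mpr (by omega)
  simpa [smul_smul, hNk] using Submodule.smul_of_tower_mem _ (N : k)⁻¹ hNa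

theorem Ideal.bijective_algebraMap_quotient_of_isMaximal {k A : Type*} [Field k] [IsAlgClosed k]
    [CommRing A] [Algebra k A] [Algebra.FiniteType k A] (m : Ideal A) [m.IsMaximal] :
    Function.Bijective (algebraMap k (A ⧸ m)) :=
  letI := Ideal.Quotient.field m
  have : Module.Finite k (A ⧸ m) := finite_of_finite_type_of_isJacobsonRing k (A ⧸ m)
  IsAlgClosed.algebraMap_bijective_of_isIntegral

/-- Let `A` be a commutative `k`-algebra which is an integral domain, of
finite type over `k` and formally smooth over `k` (the coordinate ring of an irreducible
smooth affine variety).  If an ideal `I` of `A` is stable under all `k`-linear derivations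
of `A`, then `I = 0` or `I = A`. -/
theorem derivation_stable_ideal_eq_bot_or_top
    (k : Type u) [Field k] [IsAlgClosed k] [CharZero k]
    (A : Type u) [CommRing A] [IsDomain A] [Algebra k A]
    [Algebra.FiniteType k A] [Algebra.FormallySmooth k A]
    (I : Ideal A)
    (hI : ∀ (δ : Derivation k A A), ∀ a ∈ I, δ a ∈ I) :
    I = ⊥ ∨ I = ⊤ := by
  refine or_iff_not_imp_right.mpr fun hI_ne_top => ?_
  have := Algebra.FiniteType.isNoetherianRing k A
  obtain ⟨m, hm, hIm⟩ := I.exists_le_maximal hI_ne_top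
  have : Algebra.FormallySmooth k (A ⧸ m) :=
    .of_equiv (AlgEquiv.ofBijective (Algebra.ofId k _) m.bijective_algebraMap_quotient_of_isMaximal)
  obtain ⟨n, x, δ, hx, hE⟩ :=
    m.exists_sum_smul_derivation_sub_mem_sq (k := k) (IsNoetherian.noetherian m)
  have hIpow : ∀ N, I ≤ m ^ (N + 1) := fun N => by
    induction N with
    | zero => simpa using hIm
    | succ N ih => exact Ideal.le_pow_succ_of_le_pow hx hE (fun i => hI (δ i)) N.succ_pos ih
  rw [eq_bot_iff, ← Ideal.iInf_pow_eq_bot_of_isDomain m hm.ne_top]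
  exact le_iInf fun N => (hIpow N).trans (Ideal.pow_le_pow_right N.le_succ)
end

section
/- Let M be an A-module with AV-module structure π. For every multi-index k ∈ ℕ^n with k ≠ 0 and every p ∈ {1,…,n}, the operator ρ_{k,p} : M → M is A-linear: ρ_{k,p}(f·m) = f·ρ_{k,p}(m) for all f ∈ A, m ∈ M. -/
/-!
By the Leibniz rule, `ρ_{K,p}(f • m) - f • ρ_{K,p}(m)` equals
`(Σ_{j ≤ K} (−1)^{|K−j|} C(K,j)) X^K ∂_p f • m`, since `X^{K−j} X^j = X^K`. The coefficient sum
factors as `∏_i (1 − 1)^{K_i}`, which vanishes as soon as some `K_i ≠ 0`.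
-/

open MvPolynomial

attribute [local instance 100] LieRing.ofAssociativeRing

/-- The operator `ρ_{K,p}` built from an `AV`-module structure `π`:
`ρ_{K,p}(m) = Σ_{0 ≤ j ≤ K} (−1)^{|K−j|} C(K,j) X^{K−j} • π(X^j ∂_p)(m)`. -/
noncomputable def rho {k : Type*} [Field k] [CharZero k] {n : ℕ}
    {M : Type*} [AddCommGroup M] [Module k M]
    [Module (MvPolynomial (Fin n) k) M] [IsScalarTower k (MvPolynomial (Fin n) k) M]
    (π : Derivation k (MvPolynomial (Fin n) k) (MvPolynomial (Fin n) k)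
        →ₗ⁅k⁆ Module.End k M)
    (K : Fin n →₀ ℕ) (p : Fin n) (m : M) : M :=
  ∑ j ∈ Finset.Iic K,
    (((-1 : MvPolynomial (Fin n) k) ^ ((K - j).sum fun _ v => v)) *
        ((∏ i, (K i).choose (j i) : ℕ) : MvPolynomial (Fin n) k) *
        monomial (K - j) (1 : k)) •
      π ((monomial j (1 : k) : MvPolynomial (Fin n) k) • pderiv p) m

open Finset

theorem Finsupp.sum_Iic_prod_eq_prod_sum_Iic {ι R : Type*} [Fintype ι] [DecidableEq ι]
    [CommSemiring R] (K : ι →₀ ℕ) (g : ι → ℕ → R) :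
    ∑ j ∈ Iic K, ∏ i, g i (j i) = ∏ i, ∑ t ∈ Iic (K i), g i t := by
  rw [prod_univ_sum]
  exact sum_equiv Finsupp.equivFunOnFinite (by simp [Finsupp.le_def]) (by simp)

theorem Nat.sum_Iic_neg_one_pow_mul_choose {R : Type*} [CommRing R] {m : ℕ} (hm : m ≠ 0) :
    ∑ t ∈ Iic m, (-1 : R) ^ (m - t) * m.choose t = 0 := by
  simpa [← Nat.range_succ_eq_Iic, zero_pow hm] using (add_pow (1 : R) (-1) m).symm

theorem Finsupp.sum_Iic_neg_one_pow_mul_choose {ι R : Type*} [Fintype ι] [DecidableEq ι]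
    [CommRing R] {K : ι →₀ ℕ} (hK : K ≠ 0) :
    ∑ j ∈ Iic K, (-1 : R) ^ ((K - j).sum fun _ v => v) * ((∏ i, (K i).choose (j i) : ℕ) : R)
      = 0 := by
  have hterm (j : ι →₀ ℕ) : (-1 : R) ^ ((K - j).sum fun _ v => v) *
      ((∏ i, (K i).choose (j i) : ℕ) : R) = ∏ i, (-1 : R) ^ (K i - j i) * (K i).choose (j i) := by
    rw [Finsupp.sum_fintype _ _ fun _ => rfl, prod_mul_distrib, prod_pow_eq_pow_sum,
      Nat.cast_prod]
    rfl
  rw [Finset.sum_congr rfl fun j _ => hterm j,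
    sum_Iic_prod_eq_prod_sum_Iic K fun i t => (-1 : R) ^ (K i - t) * (K i).choose t]
  obtain ⟨i, hi⟩ := Finsupp.ne_iff.mp hK
  exact prod_eq_zero (mem_univ i) (Nat.sum_Iic_neg_one_pow_mul_choose hi)

section Leibniz

variable {k A M ι : Type*} [CommRing k] [CommRing A] [Algebra k A] [AddCommGroup M] [Module k M]
  [Module A M] (π : Derivation k A A →ₗ⁅k⁆ Module.End k M)

theorem LieHom.sum_smul_apply_smul_of_leibniz
    (hLeibniz : ∀ (η : Derivation k A A) (f : A) (m : M), π η (f • m) = f • π η m + η f • m)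
    (s : Finset ι) (a b : ι → A) (D : Derivation k A A) (f : A) (m : M) :
    ∑ i ∈ s, a i • π (b i • D) (f • m)
      = f • ∑ i ∈ s, a i • π (b i • D) m + ((∑ i ∈ s, a i * b i) * D f) • m := by
  simp_rw [hLeibniz, smul_add, smul_comm (a _) f, smul_sum, sum_mul, sum_smul,
    Derivation.smul_apply, smul_smul, smul_eq_mul, mul_assoc, sum_add_distrib]

end Leibniz

/-- For every nonzero multi-index `K` and every `p`, the operator
`ρ_{K,p}` is `A`-linear: `ρ_{K,p}(f • m) = f • ρ_{K,p}(m)`. -/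
theorem rho_A_linear
    (k : Type*) [Field k] [CharZero k] (n : ℕ)
    (M : Type*) [AddCommGroup M] [Module k M]
    [Module (MvPolynomial (Fin n) k) M] [IsScalarTower k (MvPolynomial (Fin n) k) M]
    (π : Derivation k (MvPolynomial (Fin n) k) (MvPolynomial (Fin n) k)
        →ₗ⁅k⁆ Module.End k M)
    (hLeibniz : ∀ (η : Derivation k (MvPolynomial (Fin n) k) (MvPolynomial (Fin n) k))
        (f : MvPolynomial (Fin n) k) (m : M),
        π η (f • m) = f • (π η m) + (η f) • m)
    (K : Fin n →₀ ℕ) (hK : K ≠ 0) (p : Fin n) :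
    ∀ (f : MvPolynomial (Fin n) k) (m : M),
      rho π K p (f • m) = f • rho π K p m := by
  intro f m
  have hmonomial {j : Fin n →₀ ℕ} (hj : j ∈ Iic K) :
      (monomial (K - j) 1 * monomial j 1 : MvPolynomial (Fin n) k) = monomial K 1 := by
    rw [monomial_mul, one_mul, tsub_add_cancel_of_le (mem_Iic.mp hj)]
  rw [rho, rho, LieHom.sum_smul_apply_smul_of_leibniz π hLeibniz, add_eq_left,
    Finset.sum_congr rfl fun j hj => by rw [mul_assoc, hmonomial hj], ← sum_mul,
    Finsupp.sum_Iic_neg_one_pow_mul_choose hK, zero_mul, zero_mul, zero_smul]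
end

section
/- Let M be an A-module with AV-module structure π. For every multi-index k ∈ ℕ^n with k ≠ 0 and all p, q ∈ {1,…,n}, the operator ρ_{k,p} commutes with π(∂/∂x_q): π(∂/∂x_q) ∘ ρ_{k,p} = ρ_{k,p} ∘ π(∂/∂x_q) as maps M → M. -/
/-!
Moving `π(∂_q)` past `X^{K-j} • π(X^j ∂_p)` costs, by the Leibniz rule and
`[∂_q, X^j ∂_p] = ∂_q(X^j) ∂_p`, the two terms `(K-j)_q X^{K-j-e_q} • π(X^j ∂_p)` and
`j_q X^{K-j} • π(X^{j-e_q} ∂_p)`. Weighted by `(-1)^{|K-j|} C(K,j)` they cancel in pairs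
`j ↔ j + e_q`, because `(j_q + 1) C(K, j + e_q) = (K_q - j_q) C(K, j)`. Equivalently:
`∂_q ⊗ 1 + 1 ⊗ ∂_q` annihilates `∏ᵢ (1 ⊗ xᵢ - xᵢ ⊗ 1)^{Kᵢ} = Σ_j (-1)^{|K-j|} C(K,j) X^{K-j} ⊗ X^j`.
-/

open MvPolynomial

attribute [local instance 100] LieRing.ofAssociativeRing

section MultiIndex

variable {ι : Type*}

noncomputable def signedChoose [Fintype ι] (K j : ι →₀ ℕ) : ℤ :=
  (-1) ^ (K - j).degree * ((∏ i, (K i).choose (j i) : ℕ) : ℤ)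

theorem prod_choose_add_single_mul [Fintype ι] (K j : ι →₀ ℕ) (q : ι) :
    (∏ i, (K i).choose ((j + Finsupp.single q 1 : ι →₀ ℕ) i)) * (j q + 1)
      = (∏ i, (K i).choose (j i)) * (K q - j q) := by
  classical
  rw [← Finset.mul_prod_erase _ _ (Finset.mem_univ q),
    ← Finset.mul_prod_erase _ (fun i => (K i).choose (j i)) (Finset.mem_univ q),
    Finset.prod_congr rfl fun i hi => by
      rw [Finsupp.add_apply, Finsupp.single_eq_of_ne (Finset.ne_of_mem_erase hi), add_zero]]
  simp only [Finsupp.add_apply, Finsupp.single_eq_same]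
  rw [mul_right_comm, Nat.choose_succ_right_eq, mul_right_comm]

theorem degree_tsub_eq_degree_tsub_add_single_add_one {K j : ι →₀ ℕ} {q : ι}
    (h : j + Finsupp.single q 1 ≤ K) :
    (K - j).degree = (K - (j + Finsupp.single q 1)).degree + 1 := by
  have hsplit : K - j = K - (j + Finsupp.single q 1) + Finsupp.single q 1 := by
    rw [tsub_add_eq_tsub_tsub, tsub_add_cancel_of_le (le_tsub_of_add_le_left h)]
  rw [hsplit, map_add, Finsupp.degree_single]

theorem signedChoose_add_single_mul [Fintype ι] {K j : ι →₀ ℕ} {q : ι}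
    (h : j + Finsupp.single q 1 ≤ K) :
    signedChoose K (j + Finsupp.single q 1) * ((j + Finsupp.single q 1 : ι →₀ ℕ) q : ℕ)
      = -(signedChoose K j * ((K - j) q : ℕ)) := by
  have hq : j q < K q := by simpa using h q
  have hchoose := congrArg (Nat.cast : ℕ → ℤ) (prod_choose_add_single_mul K j q)
  push_cast [Nat.cast_sub hq.le] at hchoose
  simp only [signedChoose, Finsupp.add_apply, Finsupp.single_eq_same, Finsupp.tsub_apply,
    degree_tsub_eq_degree_tsub_add_single_add_one h, pow_succ]
  push_cast [Nat.cast_sub hq.le]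
  linear_combination (-1 : ℤ) ^ (K - (j + Finsupp.single q 1)).degree * hchoose

theorem sum_Iic_eq_sum_filter_add_single [DecidableEq ι] {N : Type*} [AddCommMonoid N]
    (K : ι →₀ ℕ) (q : ι) {F : (ι →₀ ℕ) → N} (hF : ∀ j, j q = 0 → F j = 0) :
    ∑ j ∈ Finset.Iic K, F j
      = ∑ j ∈ Finset.Iic K with j + Finsupp.single q 1 ≤ K, F (j + Finsupp.single q 1) := by
  rw [← Finset.sum_filter_of_ne (p := fun j => Finsupp.single q 1 ≤ j)
    fun j _ hj => by simpa [Finsupp.single_le_iff, Nat.one_le_iff_ne_zero] using mt (hF j) hj]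
  refine Finset.sum_nbij' (· - Finsupp.single q 1) (· + Finsupp.single q 1) ?_ ?_ ?_ ?_ ?_
  · simp only [Finset.mem_filter, Finset.mem_Iic, and_imp]
    exact fun j hK hq => ⟨tsub_le_self.trans hK, by rwa [tsub_add_cancel_of_le hq]⟩
  · simp only [Finset.mem_filter, Finset.mem_Iic, and_imp]
    exact fun j _ h => ⟨h, le_add_self⟩
  · intro j hj
    exact tsub_add_cancel_of_le (Finset.mem_filter.mp hj).2
  · intro j _
    exact add_tsub_cancel_right j _
  · intro j hj
    rw [tsub_add_cancel_of_le (Finset.mem_filter.mp hj).2]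

theorem sum_signedChoose_smul_eq_zero [Fintype ι] [DecidableEq ι] {N : Type*} [AddCommGroup N]
    (K : ι →₀ ℕ) (q : ι) (G : (ι →₀ ℕ) → (ι →₀ ℕ) → N) :
    ∑ j ∈ Finset.Iic K, signedChoose K j •
        ((K - j) q • G (K - j - Finsupp.single q 1) j
          + j q • G (K - j) (j - Finsupp.single q 1)) = 0 := by
  set e : ι →₀ ℕ := Finsupp.single q 1
  have hlower : ∑ j ∈ Finset.Iic K, signedChoose K j • (K - j) q • G (K - j - e) j
      = ∑ j ∈ Finset.Iic K with j + e ≤ K, signedChoose K j • (K - j) q • G (K - j - e) j := by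
    refine (Finset.sum_filter_of_ne fun j hj hne => ?_).symm
    have hq : (K - j) q ≠ 0 := fun h => hne (by rw [h, zero_smul, smul_zero])
    rw [← le_tsub_iff_left (Finset.mem_Iic.mp hj), Finsupp.single_le_iff]
    exact Nat.one_le_iff_ne_zero.mpr hq
  have hraise : ∑ j ∈ Finset.Iic K, signedChoose K j • j q • G (K - j) (j - e)
      = ∑ j ∈ Finset.Iic K with j + e ≤ K,
          signedChoose K (j + e) • (j + e) q • G (K - (j + e)) (j + e - e) :=
    sum_Iic_eq_sum_filter_add_single K q fun j hj => by rw [hj, zero_smul, smul_zero]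
  simp_rw [smul_add, Finset.sum_add_distrib]
  rw [hlower, hraise, ← Finset.sum_add_distrib]
  refine Finset.sum_eq_zero fun j hj => ?_
  rw [add_tsub_cancel_right, tsub_add_eq_tsub_tsub, ← Nat.cast_smul_eq_nsmul ℤ,
    ← Nat.cast_smul_eq_nsmul ℤ, smul_smul, smul_smul, ← add_smul,
    signedChoose_add_single_mul (Finset.mem_filter.mp hj).2, add_neg_cancel, zero_smul]

end MultiIndex

section Derivations

variable {R σ : Type*}

theorem pderiv_lie_smul_pderiv [CommRing R] (f : MvPolynomial σ R) (p q : σ) :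
    ⁅pderiv (R := R) q, f • pderiv p⁆ = pderiv q f • pderiv (R := R) p := by
  classical
  refine derivation_ext fun i => ?_
  simp only [Derivation.commutator_apply, Derivation.smul_apply, smul_eq_mul, pderiv_mul,
    pderiv_X, Pi.single_apply]
  split_ifs <;> simp

theorem pderiv_monomial_one [CommSemiring R] (a : σ →₀ ℕ) (q : σ) :
    pderiv q (monomial a (1 : R)) = a q • monomial (a - Finsupp.single q 1) 1 := by
  rw [pderiv_monomial, smul_monomial, one_mul, nsmul_one]

theorem LieHom.apply_smul_apply_of_leibniz [CommRing R] {A M : Type*} [CommRing A] [Algebra R A]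
    [AddCommGroup M] [Module R M] [Module A M]
    (π : Derivation R A A →ₗ⁅R⁆ Module.End R M)
    (hLeibniz : ∀ (η : Derivation R A A) (f : A) (m : M), π η (f • m) = f • π η m + η f • m)
    (η ξ : Derivation R A A) (f : A) (m : M) :
    π η (f • π ξ m) = f • π ξ (π η m) + η f • π ξ m + f • π ⁅η, ξ⁆ m := by
  rw [hLeibniz, LieHom.map_lie, Ring.lie_def, LinearMap.sub_apply, Module.End.mul_apply,
    Module.End.mul_apply, smul_sub]
  abel

end Derivations

theorem rho_eq_sum_signedChoose_smul {k : Type*} [Field k] [CharZero k] {n : ℕ}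
    {M : Type*} [AddCommGroup M] [Module k M]
    [Module (MvPolynomial (Fin n) k) M] [IsScalarTower k (MvPolynomial (Fin n) k) M]
    (π : Derivation k (MvPolynomial (Fin n) k) (MvPolynomial (Fin n) k)
        →ₗ⁅k⁆ Module.End k M)
    (K : Fin n →₀ ℕ) (p : Fin n) (m : M) :
    rho π K p m = ∑ j ∈ Finset.Iic K, signedChoose K j •
      (monomial (K - j) (1 : k) • π (monomial j (1 : k) • pderiv p) m) := by
  refine Finset.sum_congr rfl fun j _ => ?_
  rw [← Int.cast_smul_eq_zsmul (MvPolynomial (Fin n) k), ← mul_smul, signedChoose]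
  push_cast
  -- `Finsupp.degree` unfolds to the `Finsupp.sum` used in `rho`
  rfl

theorem rho_commutes_with_partials_general
    (k : Type*) [Field k] [CharZero k] (n : ℕ)
    (M : Type*) [AddCommGroup M] [Module k M]
    [Module (MvPolynomial (Fin n) k) M] [IsScalarTower k (MvPolynomial (Fin n) k) M]
    (π : Derivation k (MvPolynomial (Fin n) k) (MvPolynomial (Fin n) k)
        →ₗ⁅k⁆ Module.End k M)
    (hLeibniz : ∀ (η : Derivation k (MvPolynomial (Fin n) k) (MvPolynomial (Fin n) k))
        (f : MvPolynomial (Fin n) k) (m : M),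
        π η (f • m) = f • (π η m) + (η f) • m)
    (K : Fin n →₀ ℕ) (p q : Fin n) :
    ∀ m : M, π (pderiv q) (rho π K p m) = rho π K p (π (pderiv q) m) := by
  intro m
  set G : (Fin n →₀ ℕ) → (Fin n →₀ ℕ) → M :=
    fun a b => monomial a (1 : k) • π (monomial b (1 : k) • pderiv p) m
  have hcomm : ∀ j : Fin n →₀ ℕ,
      π (pderiv q) (monomial (K - j) (1 : k) • π (monomial j (1 : k) • pderiv p) m)
        = monomial (K - j) (1 : k) • π (monomial j (1 : k) • pderiv p) (π (pderiv q) m)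
          + ((K - j) q • G (K - j - Finsupp.single q 1) j
            + j q • G (K - j) (j - Finsupp.single q 1)) := by
    intro j
    simp only [G]
    rw [LieHom.apply_smul_apply_of_leibniz π hLeibniz, pderiv_lie_smul_pderiv,
      pderiv_monomial_one, pderiv_monomial_one, smul_assoc, smul_assoc, map_nsmul,
      LinearMap.smul_apply, smul_comm _ (j q), add_assoc]
  rw [rho_eq_sum_signedChoose_smul, rho_eq_sum_signedChoose_smul, map_sum,
    Finset.sum_congr rfl fun j _ => by rw [map_zsmul, hcomm, smul_add], Finset.sum_add_distrib,
    sum_signedChoose_smul_eq_zero, add_zero]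

/-- For every nonzero multi-index `K` and all `p, q`, the operator
`ρ_{K,p}` commutes with `π(∂/∂x_q)`. -/
theorem rho_commutes_with_partials
    (k : Type*) [Field k] [CharZero k] (n : ℕ)
    (M : Type*) [AddCommGroup M] [Module k M]
    [Module (MvPolynomial (Fin n) k) M] [IsScalarTower k (MvPolynomial (Fin n) k) M]
    (π : Derivation k (MvPolynomial (Fin n) k) (MvPolynomial (Fin n) k)
        →ₗ⁅k⁆ Module.End k M)
    (hLeibniz : ∀ (η : Derivation k (MvPolynomial (Fin n) k) (MvPolynomial (Fin n) k))
        (f : MvPolynomial (Fin n) k) (m : M),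
        π η (f • m) = f • (π η m) + (η f) • m)
    (K : Fin n →₀ ℕ) (hK : K ≠ 0) (p q : Fin n) :
    ∀ m : M, π (pderiv q) (rho π K p m) = rho π K p (π (pderiv q) m) :=
  rho_commutes_with_partials_general k n M π hLeibniz K p q
end

section
/- Let M be a free A-module of finite rank over A = k[x_1,…,x_n], let L_+ be the Lie subalgebra of Der_k(A) consisting of derivations η with constant term zero (i.e. η(x_i)(0) = 0 for all i), and let ρ : L_+ → End_A(M) be a Lie algebra homomorphism into the A-linear endomorphisms of M. Then the set of pairs (k, p), with k ∈ ℕ^n a nonzero multi-index and p ∈ {1,…,n}, such that ρ(X^k ∂_p) ≠ 0, is finite. -/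
open MvPolynomial

attribute [local instance 100] LieRing.ofAssociativeRing

lemma constantCoeff_derivation_apply_eq_zero
    {k : Type*} [Field k] [CharZero k] {n : ℕ}
    (d : Derivation k (MvPolynomial (Fin n) k) (MvPolynomial (Fin n) k))
    (hd : ∀ i, constantCoeff (d (X i)) = 0) (f : MvPolynomial (Fin n) k) :
    constantCoeff (d f) = 0 := by
  induction f using MvPolynomial.induction_on with
  | C a =>
      rw [show (C a : MvPolynomial (Fin n) k) = a • 1 by
        rw [smul_eq_C_mul, mul_one]]
      simp
  | add p q hp hq => simp [hp, hq]
  | mul_X p i _ =>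
      rw [Derivation.leibniz]
      simp [smul_eq_mul, hd i]

/-- The Lie subalgebra `L₊` of vector fields on affine `n`-space vanishing at the
origin: derivations `η` with `η(x_i)(0) = 0` for all `i`. -/
noncomputable def Lplus (k : Type*) [Field k] [CharZero k] (n : ℕ) :
    LieSubalgebra k (Derivation k (MvPolynomial (Fin n) k) (MvPolynomial (Fin n) k)) where
  carrier := {d | ∀ i, constantCoeff (d (X i)) = 0}
  add_mem' := by intro a b ha hb i; simp [ha i, hb i]
  zero_mem' := by intro i; simp
  smul_mem' := by
    intro c d hd i
    simp only [Derivation.coe_smul, Pi.smul_apply, smul_eq_C_mul, map_mul, hd i, mul_zero]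
  lie_mem' := by
    intro a b ha hb i
    rw [Derivation.commutator_apply]
    simp [constantCoeff_derivation_apply_eq_zero a ha,
      constantCoeff_derivation_apply_eq_zero b hb]

/-!
The Euler field `E = ∑ xᵢ ∂ᵢ` lies in `L₊`, and `X^K ∂_p` is an eigenvector of `ad E` with
eigenvalue `|K| - 1`. Hence whenever `ρ(X^K ∂_p) ≠ 0`, it is an eigenvector of the `A`-linear
operator `ad ρ(E)` on `End_A(M)` with eigenvalue `|K| - 1`. As `End_A(M)` is a finitely generated
torsion-free module over the noetherian domain `A`, eigenvectors for distinct eigenvalues are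
linearly independent and so `ad ρ(E)` has only finitely many eigenvalues. This bounds `|K|`, and
there are only finitely many pairs `(K, p)` of bounded degree.
-/

namespace Module.End

theorem finite_setOf_hasEigenvalue {R N : Type*} [CommRing R] [IsDomain R] [AddCommGroup N]
    [Module R N] [IsTorsionFree R N] [IsNoetherian R N] (f : End R N) :
    {μ | f.HasEigenvalue μ}.Finite := by
  choose v hv using fun μ : {μ | f.HasEigenvalue μ} => μ.2.exists_hasEigenvector
  have := (f.eigenvectors_linearIndependent _ v hv).finite_of_isNoetherian
  exact Set.toFinite _

end Module.End

theorem LieHom.hasEigenvector_ad_of_lie_eq_smul {k A L E : Type*} [CommRing k] [CommRing A]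
    [Algebra k A] [LieRing L] [LieAlgebra k L] [Ring E] [Algebra A E] [Algebra k E]
    [IsScalarTower k A E] (ρ : L →ₗ⁅k⁆ E) {x y : L} {c : k} (h : ⁅x, y⁆ = c • y)
    (hy : ρ y ≠ 0) :
    (LieAlgebra.ad A E (ρ x)).HasEigenvector (algebraMap k A c) (ρ y) := by
  refine ⟨Module.End.mem_eigenspace_iff.2 ?_, hy⟩
  rw [LieAlgebra.ad_apply, ← LieHom.map_lie, h, map_smul, algebraMap_smul]

namespace MvPolynomial

variable {R σ : Type*} [CommRing R] [Fintype σ]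

variable (R σ) in
noncomputable def eulerDerivation : Derivation R (MvPolynomial σ R) (MvPolynomial σ R) :=
  ∑ i, (X i : MvPolynomial σ R) • pderiv i

theorem IsHomogeneous.eulerDerivation_apply {f : MvPolynomial σ R} {m : ℕ}
    (hf : f.IsHomogeneous m) : eulerDerivation R σ f = m • f := by
  rw [← hf.sum_X_mul_pderiv, eulerDerivation, ← Derivation.coeFnAddMonoidHom_apply, map_sum,
    Finset.sum_apply]
  rfl

theorem eulerDerivation_X (i : σ) : eulerDerivation R σ (X i) = X i := by
  rw [(isHomogeneous_X (R := R) i).eulerDerivation_apply, one_smul]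

theorem IsHomogeneous.lie_eulerDerivation_smul_pderiv {f : MvPolynomial σ R} {m : ℕ}
    (hf : f.IsHomogeneous m) (p : σ) :
    ⁅eulerDerivation R σ, f • pderiv (R := R) p⁆ = ((m : R) - 1) • (f • pderiv p) := by
  refine derivation_ext fun i => ?_
  rw [Derivation.commutator_apply, eulerDerivation_X]
  rcases eq_or_ne i p with rfl | hip
  · simp [hf.eulerDerivation_apply, sub_smul, Nat.cast_smul_eq_nsmul]
  · simp [pderiv_X_of_ne hip]

theorem eulerDerivation_mem_Lplus {k : Type*} [Field k] [CharZero k] {n : ℕ} :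
    eulerDerivation k (Fin n) ∈ Lplus k n := fun i => by
  rw [eulerDerivation_X, constantCoeff_X]

end MvPolynomial

theorem finitely_many_nonzero_rho_of_A_linear_action_general
    (k : Type*) [Field k] [CharZero k] (n : ℕ)
    (M : Type*) [AddCommGroup M] [Module k M]
    [Module (MvPolynomial (Fin n) k) M] [IsScalarTower k (MvPolynomial (Fin n) k) M]
    [Module.Free (MvPolynomial (Fin n) k) M] [Module.Finite (MvPolynomial (Fin n) k) M]
    (ρ : Lplus k n →ₗ⁅k⁆ Module.End (MvPolynomial (Fin n) k) M) :
    {x : (Fin n →₀ ℕ) × Fin n | x.1 ≠ 0 ∧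
      ∃ d : Lplus k n,
        (d : Derivation k (MvPolynomial (Fin n) k) (MvPolynomial (Fin n) k))
          = (monomial x.1 (1 : k) : MvPolynomial (Fin n) k) • pderiv x.2
        ∧ ρ d ≠ 0}.Finite := by
  let E : Lplus k n := ⟨eulerDerivation k (Fin n), eulerDerivation_mem_Lplus⟩
  let adρE := LieAlgebra.ad (MvPolynomial (Fin n) k) _ (ρ E)
  have hdegrees : {m : ℕ | adρE.HasEigenvalue (algebraMap k _ ((m : k) - 1))}.Finite := by
    refine adρE.finite_setOf_hasEigenvalue.preimage (Function.Injective.injOn ?_)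
    exact (FaithfulSMul.algebraMap_injective k _).comp (sub_left_injective.comp Nat.cast_injective)
  refine (hdegrees.biUnion fun m _ =>
    (Finsupp.finite_of_degree_eq m).prod Set.finite_univ).subset ?_
  rintro ⟨K, p⟩ ⟨-, d, hd, hρd⟩
  refine Set.mem_biUnion (x := K.degree) ?_ ⟨rfl, trivial⟩
  have hlie : ⁅E, d⁆ = ((K.degree : k) - 1) • d := Subtype.ext <| by
    simpa [hd] using IsHomogeneous.lie_eulerDerivation_smul_pderiv
      (isHomogeneous_monomial (1 : k) rfl) p
  exact Module.End.hasEigenvalue_of_hasEigenvector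
    (ρ.hasEigenvector_ad_of_lie_eq_smul (A := MvPolynomial (Fin n) k) hlie hρd)

/-- Let `M` be a free `A`-module of finite rank over
`A = k[x_1, …, x_n]` and `ρ : L₊ → End_A(M)` a Lie algebra homomorphism into the
`A`-linear endomorphisms of `M`.  Then only finitely many pairs `(K, p)` with `K ≠ 0`
satisfy `ρ(X^K ∂_p) ≠ 0`. -/
theorem finitely_many_nonzero_rho_of_A_linear_action
    (k : Type*) [Field k] [IsAlgClosed k] [CharZero k] (n : ℕ)
    (M : Type*) [AddCommGroup M] [Module k M]
    [Module (MvPolynomial (Fin n) k) M] [IsScalarTower k (MvPolynomial (Fin n) k) M]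
    [Module.Free (MvPolynomial (Fin n) k) M] [Module.Finite (MvPolynomial (Fin n) k) M]
    (ρ : Lplus k n →ₗ⁅k⁆ Module.End (MvPolynomial (Fin n) k) M) :
    {x : (Fin n →₀ ℕ) × Fin n | x.1 ≠ 0 ∧
      ∃ d : Lplus k n,
        (d : Derivation k (MvPolynomial (Fin n) k) (MvPolynomial (Fin n) k))
          = (monomial x.1 (1 : k) : MvPolynomial (Fin n) k) • pderiv x.2
        ∧ ρ d ≠ 0}.Finite :=
  finitely_many_nonzero_rho_of_A_linear_action_general k n M ρ
end
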